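/- In any algebra satisfying (B1)–(B10), with ∼x := (x ∨ ¬x) ∧ ∼̇x and ∇x := ¬¬x, the identity ∼x ∨ ∇x = 1 holds for all x. -/

import Mathlib

/-!
By distributivity, `m x ⊔ d x = ((x ⊔ n x) ⊔ n (n x)) ⊓ (s x ⊔ n (n x))`. The first factor is `⊤`
because `n x ⊔ n (n x) = n (x ⊓ n x) = n ⊥` (B7, B1) and `n ⊥ = ⊤`; the second is `⊤` because
`n x ≤ s x` (B1, B2), so antitonicity of `n` turns `s x ⊔ n (s x) = ⊤` (B4) into it.
-/

theorem antitone_of_map_sup_eq_inf {α : Type*} [Lattice α] {f : α → α}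
    (hf : ∀ x y, f (x ⊔ y) = f x ⊓ f y) : Antitone f := fun a b hab =>
  calc f b = f a ⊓ f b := by rw [← hf, sup_eq_right.mpr hab]
    _ ≤ f a := inf_le_left

section

variable {A : Type*} {n s : A → A}

/-- With `q := s (n ⊥)`, the axioms force `q ≤ n ⊥` while `q` is disjoint from `n ⊥`, so `q = ⊥`
and `n ⊥ = n ⊥ ⊔ q = ⊤`. -/
theorem map_bot_eq_top [DistribLattice A] [BoundedOrder A] (hn : Antitone n)
    (B2 : ∀ x, x ⊔ s x = ⊤) (B3 : ∀ x, n x ⊓ s (n x) = ⊥) (B4 : ∀ x, s x ⊔ n (s x) = ⊤)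
    (B9 : ∀ x y, (x ⊔ y) ⊓ s (x ⊔ y) ≤ x ⊔ n x) : n ⊥ = ⊤ := by
  set q := s (n ⊥)
  have hdisj : Disjoint (n ⊥) q := disjoint_iff.mpr (B3 ⊥)
  have hcodisj : Codisjoint (s q) (n ⊥) :=
    (codisjoint_iff.mpr (B4 q)).mono_right (hn bot_le)
  have hq_inf : q ⊓ s q ≤ n ⊥ := by simpa only [bot_sup_eq] using B9 ⊥ q
  have hq : q = ⊥ := hdisj.symm.eq_bot_of_le (hcodisj.left_le_of_le_inf_right hq_inf)
  calc n ⊥ = n ⊥ ⊔ q := by rw [hq, sup_bot_eq]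
    _ = ⊤ := B2 (n ⊥)

theorem codisjoint_map_map_map_self [Lattice A] [BoundedOrder A] (hbot : n ⊥ = ⊤)
    (B1 : ∀ x, x ⊓ n x = ⊥) (B7 : ∀ x y, n (x ⊓ n y) = n x ⊔ n (n y)) (x : A) :
    Codisjoint (n x) (n (n x)) := by
  rw [codisjoint_iff, ← B7, B1, hbot]

theorem codisjoint_map_map_of_map_le [Lattice A] [OrderTop A] (hn : Antitone n)
    (B4 : ∀ x, s x ⊔ n (s x) = ⊤) {x : A} (hx : n x ≤ s x) : Codisjoint (s x) (n (n x)) :=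
  (codisjoint_iff.mpr (B4 x)).mono_right (hn hx)

end

theorem stmt_general {A : Type*} [DistribLattice A] [BoundedOrder A]
    (n s : A → A)
    (B1 : ∀ x : A, x ⊓ n x = ⊥)
    (B2 : ∀ x : A, x ⊔ s x = ⊤)
    (B3 : ∀ x : A, n x ⊓ s (n x) = ⊥)
    (B4 : ∀ x : A, s x ⊔ n (s x) = ⊤)
    (B6 : ∀ x y : A, n (x ⊔ y) = n x ⊓ n y)
    (B7 : ∀ x y : A, n (x ⊓ n y) = n x ⊔ n (n y))
    (B9 : ∀ x y : A, (x ⊔ y) ⊓ s (x ⊔ y) ≤ x ⊔ n x)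
    (m : A → A) (hm : ∀ x : A, m x = (x ⊔ n x) ⊓ s x)
    (d : A → A) (hd : ∀ x : A, d x = n (n x)) :
    ∀ x : A, m x ⊔ d x = ⊤ := by
  intro x
  have hn : Antitone n := antitone_of_map_sup_eq_inf B6
  have hbot : n ⊥ = ⊤ := map_bot_eq_top hn B2 B3 B4 B9
  have hns : n x ≤ s x :=
    (disjoint_iff.mpr (B1 x)).symm.le_of_codisjoint (codisjoint_iff.mpr (B2 x))
  have h₁ : Codisjoint (x ⊔ n x) (n (n x)) :=
    (codisjoint_map_map_map_self hbot B1 B7 x).mono_left le_sup_right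
  have h₂ : Codisjoint (s x) (n (n x)) := codisjoint_map_map_of_map_le hn B4 hns
  rw [hm, hd, ← codisjoint_iff]
  exact h₁.inf_left h₂

theorem stmt {A : Type*} [DistribLattice A] [BoundedOrder A]
    (n s : A → A)
    (B1 : ∀ x : A, x ⊓ n x = ⊥)
    (B2 : ∀ x : A, x ⊔ s x = ⊤)
    (B3 : ∀ x : A, n x ⊓ s (n x) = ⊥)
    (B4 : ∀ x : A, s x ⊔ n (s x) = ⊤)
    (B5 : ∀ x y : A, s (x ⊓ y) = s x ⊔ s y)
    (B6 : ∀ x y : A, n (x ⊔ y) = n x ⊓ n y)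
    (B7 : ∀ x y : A, n (x ⊓ n y) = n x ⊔ n (n y))
    (B8 : ∀ x y : A, s (x ⊔ s y) = s x ⊓ s (s y))
    (B9 : ∀ x y : A, (x ⊔ y) ⊓ s (x ⊔ y) ≤ x ⊔ n x)
    (B10 : ∀ x y : A, x ⊓ s x ⊓ y ⊓ s y ≤ s (x ⊔ y))
    (m : A → A) (hm : ∀ x : A, m x = (x ⊔ n x) ⊓ s x)
    (d : A → A) (hd : ∀ x : A, d x = n (n x)) :
    ∀ x : A, m x ⊔ d x = ⊤ :=
  stmt_general n s B1 B2 B3 B4 B6 B7 B9 m hm d hd
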